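/- arXiv:1710.02125 — 3 statements merged into one kernel-verified Lean document; each statement's English description precedes it below -/
import Mathlib

section
/- For distinct odd primes q₁ and q₂, the triple sum Σ_{d mod q₁q₂, gcd(d,q₁q₂)=1} Σ_{s mod q₁q₂} Σ_{t mod q₁q₂} ((4d-s²)(4d-t²)/(q₁q₂)) is at most (q₁-1)(q₂-1), where (·/(q₁q₂)) is the Jacobi symbol. -/
/-!
Since the Jacobi symbol is multiplicative in its numerator, the inner double sum for a unit `d`
is the square of `S(d) = ∑ₛ ((4d - s²) / q₁q₂)`. By the Chinese remainder theorem `S(d)` factors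
into the two sums `∑ₓ χᵢ(4d - x²)` over `𝔽_{qᵢ}`, and each of these equals `-χᵢ(-1)`: the number of
square roots of `b` is `1 + χᵢ(b)`, which reduces it to a Jacobi sum. Hence `S(d) = ((-1) / q₁q₂)`,
every inner sum equals `1`, and the triple sum is exactly `φ(q₁q₂) = (q₁ - 1)(q₂ - 1)`.
-/

open Finset

section QuadraticChar

variable {F : Type*} [Field F] [Fintype F] [DecidableEq F]

/-- Substituting `b = a * x` turns this into the Jacobi sum `J(χ, χ) = J(χ, χ⁻¹)`. -/
theorem quadraticChar_sum_mul_sub {a : F} (hF : ringChar F ≠ 2) (ha : a ≠ 0) :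
    ∑ b : F, quadraticChar F b * quadraticChar F (a - b) = -quadraticChar F (-1) := by
  have hJ := jacobiSum_nontrivial_inv (quadraticChar_ne_one hF)
  rw [(quadraticChar_isQuadratic F).inv, jacobiSum] at hJ
  refine hJ ▸ (Fintype.sum_equiv (Equiv.mulLeft₀ a ha) _ _ fun x => ?_).symm
  have hsq : quadraticChar F a * quadraticChar F a = 1 := by
    rw [← map_mul, ← sq, quadraticChar_sq_one' ha]
  simp only [Equiv.mulLeft₀_apply, ← mul_one_sub, map_mul]
  linear_combination -(quadraticChar F x * quadraticChar F (1 - x)) * hsq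

theorem quadraticChar_sum_sub_sq {a : F} (hF : ringChar F ≠ 2) (ha : a ≠ 0) :
    ∑ x : F, quadraticChar F (a - x ^ 2) = -quadraticChar F (-1) := by
  calc ∑ x : F, quadraticChar F (a - x ^ 2)
      = ∑ b : F, (#{x : F | x ^ 2 = b}.toFinset : ℤ) * quadraticChar F (a - b) := by
        rw [← sum_fiberwise_of_maps_to' (fun x _ => mem_univ (x ^ 2))
          (fun b => quadraticChar F (a - b))]
        simp
    _ = ∑ b : F, (quadraticChar F b * quadraticChar F (a - b) + quadraticChar F (a - b)) := by
        simp only [quadraticChar_card_sqrts hF, add_one_mul]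
    _ = -quadraticChar F (-1) := by
        rw [sum_add_distrib, quadraticChar_sum_mul_sub hF ha,
          Fintype.sum_equiv (Equiv.subLeft a) (fun b => quadraticChar F (a - b)) _ fun _ => rfl,
          quadraticChar_sum_zero hF, add_zero]

end QuadraticChar

theorem ZMod.sum_mul_cast_of_coprime {R : Type*} [CommSemiring R] {m n : ℕ} [NeZero m]
    [NeZero n] (h : m.Coprime n) (f : ZMod m → R) (g : ZMod n → R) :
    ∑ s : ZMod (m * n), f s.cast * g s.cast = (∑ x, f x) * ∑ y, g y := by
  rw [sum_mul_sum, ← Fintype.sum_prod_type', ← (ZMod.chineseRemainder h).toEquiv.sum_comp]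
  refine sum_congr rfl fun s _ => ?_
  simp [ZMod.chineseRemainder, Prod.fst_zmod_cast, Prod.snd_zmod_cast]

section Jacobi

variable {p q : ℕ} [Fact p.Prime] [Fact q.Prime]

theorem jacobiSym_mul_prime (a : ℤ) :
    jacobiSym a (p * q) = quadraticChar (ZMod p) a * quadraticChar (ZMod q) a := by
  rw [jacobiSym.mul_right, ← jacobiSym.legendreSym.to_jacobiSym,
    ← jacobiSym.legendreSym.to_jacobiSym]
  rfl

theorem jacobiSym_sum_sub_sq (hp : p ≠ 2) (hq : q ≠ 2) (hpq : p ≠ q) {c : ℤ}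
    (hcp : (c : ZMod p) ≠ 0) (hcq : (c : ZMod q) ≠ 0) :
    ∑ s : ZMod (p * q), jacobiSym (c - (s.val : ℤ) ^ 2) (p * q) = jacobiSym (-1) (p * q) := by
  have hcop : p.Coprime q := (Nat.coprime_primes Fact.out Fact.out).mpr hpq
  have hchar (r : ℕ) [Fact r.Prime] (hr : r ≠ 2) : ringChar (ZMod r) ≠ 2 := by
    rwa [ZMod.ringChar_zmod_n]
  simp only [jacobiSym_mul_prime, Int.cast_sub, Int.cast_pow, Int.cast_natCast]
  simp only [ZMod.natCast_val]
  rw [ZMod.sum_mul_cast_of_coprime hcop (fun x => quadraticChar (ZMod p) (c - x ^ 2))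
    (fun y => quadraticChar (ZMod q) (c - y ^ 2)), quadraticChar_sum_sub_sq (hchar p hp) hcp,
    quadraticChar_sum_sub_sq (hchar q hq) hcq]
  push_cast
  ring

theorem intCast_four_mul_val_ne_zero {n : ℕ} [NeZero n] (hp : p ≠ 2) (hpn : p ∣ n)
    (d : (ZMod n)ˣ) : ((4 * (d : ZMod n).val : ℤ) : ZMod p) ≠ 0 := by
  have h2 : (2 : ZMod p) ≠ 0 := Ring.two_ne_zero (by rwa [ZMod.ringChar_zmod_n])
  push_cast
  rw [ZMod.natCast_val]
  exact mul_ne_zero (by simpa [show (4 : ZMod p) = 2 * 2 by norm_num] using h2)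
    (d.isUnit.map (ZMod.castHom hpn (ZMod p))).ne_zero

end Jacobi

/-- For distinct odd primes `q₁, q₂`, the triple character sum
`∑_{d unit} ∑_s ∑_t ((4d-s²)(4d-t²) / q₁q₂)` is at most `(q₁-1)(q₂-1)`. -/
theorem triple_jacobi_sum_le (q₁ q₂ : ℕ) (hq₁ : q₁.Prime) (hq₂ : q₂.Prime)
    (hodd₁ : Odd q₁) (hodd₂ : Odd q₂) (hne : q₁ ≠ q₂) :
    haveI : NeZero (q₁ * q₂) := ⟨Nat.mul_ne_zero hq₁.pos.ne' hq₂.pos.ne'⟩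
    (∑ d : (ZMod (q₁ * q₂))ˣ, ∑ s : ZMod (q₁ * q₂), ∑ t : ZMod (q₁ * q₂),
        jacobiSym ((4 * ((d : ZMod (q₁ * q₂)).val : ℤ) - (s.val : ℤ) ^ 2) *
          (4 * ((d : ZMod (q₁ * q₂)).val : ℤ) - (t.val : ℤ) ^ 2)) (q₁ * q₂)) ≤
      ((q₁ : ℤ) - 1) * ((q₂ : ℤ) - 1) := by
  have : Fact q₁.Prime := ⟨hq₁⟩
  have : Fact q₂.Prime := ⟨hq₂⟩
  have h₁ : q₁ ≠ 2 := by rintro rfl; norm_num at hodd₁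
  have h₂ : q₂ ≠ 2 := by rintro rfl; norm_num at hodd₂
  refine le_of_eq ?_
  calc _ = ∑ d : (ZMod (q₁ * q₂))ˣ, (1 : ℤ) := by
        refine sum_congr rfl fun d _ => ?_
        simp_rw [jacobiSym.mul_left, ← sum_mul_sum]
        rw [jacobiSym_sum_sub_sq h₁ h₂ hne
          (intCast_four_mul_val_ne_zero h₁ (dvd_mul_right _ _) d)
          (intCast_four_mul_val_ne_zero h₂ (dvd_mul_left _ _) d), ← jacobiSym.mul_left]
        norm_num
    _ = ((q₁ : ℤ) - 1) * ((q₂ : ℤ) - 1) := by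
        rw [sum_const, card_univ, ZMod.card_units_eq_totient,
          Nat.totient_mul ((Nat.coprime_primes hq₁ hq₂).mpr hne), Nat.totient_prime hq₁,
          Nat.totient_prime hq₂]
        simp [Nat.cast_sub hq₁.one_le, Nat.cast_sub hq₂.one_le]
end

section
/- Let q₁, q₂ be distinct odd primes and d, t residues mod q₁q₂ with gcd(d, q₁q₂) = 1. Then the number of matrices g ∈ GL₂(ℤ/q₁q₂ℤ) with det(g) = d and tr(g) = t equals q₁q₂ · (q₁ + ((t²-4d)/q₁)) · (q₂ + ((t²-4d)/q₂)), where (·/q_i) is the Legendre symbol. -/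
open Finset

section aux

variable {F : Type*} [Field F] [Fintype F] [DecidableEq F]

lemma card_pairs_mul (m : F) :
    ((univ.filter fun p : F × F => p.1 * p.2 = m).card : ℤ)
      = ((Fintype.card F : ℤ) - 1) + (if m = 0 then (Fintype.card F : ℤ) else 0) := by
  by_cases hm : m = 0
  · subst hm
    rw [if_pos rfl]
    have h1 : (univ.filter fun p : F × F => p.1 * p.2 = 0)
        = (univ.filter fun p : F × F => p.1 = 0) ∪ (univ.filter fun p : F × F => p.2 = 0) := by
      rw [← filter_or]
      exact filter_congr fun p _ => by simp [mul_eq_zero]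
    have h2 : (univ.filter fun p : F × F => p.1 = 0) = ({0} : Finset F) ×ˢ univ := by
      ext ⟨x, y⟩; simp [Finset.mem_product, eq_comm]
    have h3 : (univ.filter fun p : F × F => p.2 = 0) = (univ : Finset F) ×ˢ {0} := by
      ext ⟨x, y⟩; simp [Finset.mem_product, eq_comm]
    have h4 : (univ.filter fun p : F × F => p.1 = 0) ∩ (univ.filter fun p : F × F => p.2 = 0)
        = {((0 : F), (0 : F))} := by
      rw [← filter_and]
      ext ⟨x, y⟩; simp [Prod.ext_iff]
    have h5 := Finset.card_union_add_card_inter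
      (univ.filter fun p : F × F => p.1 = 0) (univ.filter fun p : F × F => p.2 = 0)
    rw [h4, h2, h3] at h5
    simp only [Finset.card_singleton, Finset.card_product, Finset.card_univ, one_mul,
      mul_one] at h5
    rw [h1, h2, h3]
    have h6 := congrArg (fun k : ℕ => (k : ℤ)) h5
    have hpos : (1 : ℕ) ≤ Fintype.card F := Fintype.card_pos
    push_cast at h6 ⊢
    have : (1 : ℤ) ≤ (Fintype.card F : ℤ) := by exact_mod_cast hpos
    linarith
  · rw [if_neg hm, add_zero]
    have key : (univ.filter fun p : F × F => p.1 * p.2 = m).card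
        = (univ.filter fun x : F => x ≠ 0).card := by
      refine Finset.card_bij' (fun p _ => p.1) (fun x _ => (x, m * x⁻¹)) ?_ ?_ ?_ ?_
      · intro p hp
        simp only [mem_filter, mem_univ, true_and] at hp ⊢
        intro h0
        rw [h0, zero_mul] at hp
        exact hm hp.symm
      · intro x hx
        simp only [mem_filter, mem_univ, true_and] at hx ⊢
        rw [← mul_assoc, mul_comm x m, mul_assoc, mul_inv_cancel₀ hx, mul_one]
      · intro p hp
        simp only [mem_filter, mem_univ, true_and] at hp
        have hp1 : p.1 ≠ 0 := by
          intro h0; rw [h0, zero_mul] at hp; exact hm hp.symm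
        have : m * p.1⁻¹ = p.2 := by
          rw [← hp, mul_comm p.1 p.2, mul_assoc, mul_inv_cancel₀ hp1, mul_one]
        exact Prod.ext rfl this
      · intro x hx; rfl
    rw [key, Finset.filter_ne', Finset.card_erase_of_mem (mem_univ 0), Finset.card_univ]
    have hpos : (1 : ℕ) ≤ Fintype.card F := Fintype.card_pos
    push_cast [Nat.cast_sub hpos]
    ring

end aux

section prime

lemma card_quad_roots (q : ℕ) [Fact q.Prime] (hq : q ≠ 2) (d t : ZMod q) (a : ℤ)
    (ha : (a : ZMod q) = t ^ 2 - 4 * d) :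
    ((univ.filter fun x : ZMod q => x * (t - x) - d = 0).card : ℤ) = legendreSym q a + 1 := by
  have h2 : (2 : ZMod q) ≠ 0 := by
    intro h
    have h' : ((2 : ℕ) : ZMod q) = 0 := by push_cast; exact h
    rw [ZMod.natCast_eq_zero_iff] at h'
    exact hq ((Nat.prime_dvd_prime_iff_eq Fact.out Nat.prime_two).mp h')
  set u : ZMod q := (2 : ZMod q)⁻¹ with hu_def
  have hu : 2 * u = 1 := mul_inv_cancel₀ h2
  have key : (univ.filter fun x : ZMod q => x * (t - x) - d = 0).card
      = (univ.filter fun y : ZMod q => y ^ 2 = (a : ZMod q)).card := by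
    refine Finset.card_bij' (fun x _ => 2 * x - t) (fun y _ => (y + t) * u) ?_ ?_ ?_ ?_
    · intro x hx
      simp only [mem_filter, mem_univ, true_and] at hx ⊢
      rw [ha]
      linear_combination (-4 : ZMod q) * hx
    · intro y hy
      simp only [mem_filter, mem_univ, true_and] at hy ⊢
      rw [ha] at hy
      linear_combination (-(u ^ 2)) * hy + (d * (1 + 2 * u) - u * t * (y + t)) * hu
    · intro x hx
      linear_combination x * hu
    · intro y hy
      linear_combination (y + t) * hu
  rw [key, ← legendreSym.card_sqrts (p := q) hq a]
  congr 1
  rw [Set.toFinset_setOf]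

end prime

lemma trace_map_two {R S : Type*} [CommRing R] [CommRing S] (f : R →+* S)
    (M : Matrix (Fin 2) (Fin 2) R) : (M.map f).trace = f M.trace := by
  simp [Matrix.trace_fin_two, Matrix.map_apply, map_add]

lemma card_det_tr_prime (q : ℕ) [Fact q.Prime] (hq : q ≠ 2) (d t : ZMod q) (a : ℤ)
    (ha : (a : ZMod q) = t ^ 2 - 4 * d) :
    ((univ.filter fun g : Matrix (Fin 2) (Fin 2) (ZMod q) =>
        g.det = d ∧ g.trace = t).card : ℤ)
      = q * (q + legendreSym q a) := by
  classical
  -- bijection with triples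
  have step1 : (univ.filter fun g : Matrix (Fin 2) (Fin 2) (ZMod q) =>
        g.det = d ∧ g.trace = t).card
      = (univ.filter fun x : ZMod q × ZMod q × ZMod q =>
        x.2.1 * x.2.2 = x.1 * (t - x.1) - d).card := by
    refine Finset.card_bij' (fun g _ => (g 0 0, g 0 1, g 1 0))
      (fun x _ => !![x.1, x.2.1; x.2.2, t - x.1]) ?_ ?_ ?_ ?_
    · intro g hg
      simp only [mem_filter, mem_univ, true_and] at hg ⊢
      obtain ⟨hdet, htr⟩ := hg
      rw [Matrix.det_fin_two] at hdet
      rw [Matrix.trace_fin_two] at htr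
      linear_combination (g 0 0) * htr - hdet
    · intro x hx
      simp only [mem_filter, mem_univ, true_and] at hx ⊢
      constructor
      · rw [Matrix.det_fin_two_of]
        linear_combination -hx
      · rw [Matrix.trace_fin_two_of]
        ring
    · intro g hg
      simp only [mem_filter, mem_univ, true_and] at hg
      have htr := hg.2
      rw [Matrix.trace_fin_two] at htr
      ext i j
      fin_cases i <;> fin_cases j <;>
        simp [Matrix.cons_val_zero, Matrix.cons_val_one]
      linear_combination -htr
    · intro x hx
      ext <;> simp
  rw [step1]
  -- fiberwise count
  have step2 : ((univ.filter fun x : ZMod q × ZMod q × ZMod q =>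
        x.2.1 * x.2.2 = x.1 * (t - x.1) - d).card : ℤ)
      = ∑ b : ZMod q, ((univ.filter fun p : ZMod q × ZMod q =>
          p.1 * p.2 = b * (t - b) - d).card : ℤ) := by
    rw [Finset.card_eq_sum_card_fiberwise (f := fun x : ZMod q × ZMod q × ZMod q => x.1)
      (t := univ) (fun x _ => mem_univ _)]
    push_cast
    refine Finset.sum_congr rfl fun b _ => ?_
    congr 1
    refine Finset.card_bij' (fun x _ => x.2) (fun p _ => (b, p)) ?_ ?_ ?_ ?_
    · intro x hx
      simp only [mem_filter, mem_univ, true_and] at hx ⊢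
      rw [← hx.2]
      exact hx.1
    · intro p hp
      simp only [mem_filter, mem_univ, true_and] at hp ⊢
      exact ⟨hp, trivial⟩
    · intro x hx
      simp only [mem_filter, mem_univ, true_and] at hx
      exact Prod.ext hx.2.symm rfl
    · intro p hp; rfl
  rw [step2]
  have step3 : ∀ b : ZMod q, ((univ.filter fun p : ZMod q × ZMod q =>
        p.1 * p.2 = b * (t - b) - d).card : ℤ)
      = ((q : ℤ) - 1) + (if b * (t - b) - d = 0 then (q : ℤ) else 0) := by
    intro b
    rw [card_pairs_mul (b * (t - b) - d), ZMod.card]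
  simp only [step3]
  rw [Finset.sum_add_distrib, Finset.sum_const, ← Finset.sum_filter]
  rw [Finset.sum_const]
  have hroots := card_quad_roots q hq d t a ha
  have hcard : (univ : Finset (ZMod q)).card = q := by rw [Finset.card_univ, ZMod.card]
  rw [hcard]
  have : (((univ.filter fun x : ZMod q => x * (t - x) - d = 0).card : ℤ)) =
      legendreSym q a + 1 := hroots
  rw [nsmul_eq_mul, nsmul_eq_mul, this]
  ring

/-- For distinct odd primes `q₁, q₂` and `d, t` residues mod `q₁q₂` with `d` a unit,
the number of `g ∈ GL₂(ℤ/q₁q₂ℤ)` with `det g = d` and `tr g = t` equals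
`q₁q₂ (q₁ + ((t²-4d)/q₁)) (q₂ + ((t²-4d)/q₂))`. -/
theorem card_GL2_det_tr (q₁ q₂ : ℕ) [Fact q₁.Prime] [Fact q₂.Prime]
    (hodd₁ : Odd q₁) (hodd₂ : Odd q₂) (hne : q₁ ≠ q₂)
    (d t : ZMod (q₁ * q₂)) (hd : IsUnit d) :
    ((Finset.univ.filter fun g : Matrix (Fin 2) (Fin 2) (ZMod (q₁ * q₂)) =>
        IsUnit g.det ∧ g.det = d ∧ g.trace = t).card : ℤ) =
      (q₁ : ℤ) * q₂ * ((q₁ : ℤ) + legendreSym q₁ ((t.val : ℤ) ^ 2 - 4 * (d.val : ℤ))) *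
        ((q₂ : ℤ) + legendreSym q₂ ((t.val : ℤ) ^ 2 - 4 * (d.val : ℤ))) := by
  classical
  have hp₁ : q₁.Prime := Fact.out
  have hp₂ : q₂.Prime := Fact.out
  have hq₁2 : q₁ ≠ 2 := by rintro rfl; exact (by decide : ¬ Odd 2) hodd₁
  have hq₂2 : q₂ ≠ 2 := by rintro rfl; exact (by decide : ¬ Odd 2) hodd₂
  haveI : NeZero (q₁ * q₂) := ⟨Nat.mul_ne_zero hp₁.pos.ne' hp₂.pos.ne'⟩
  have hco : q₁.Coprime q₂ := (Nat.coprime_primes hp₁ hp₂).mpr hne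
  set f₁ : ZMod (q₁ * q₂) →+* ZMod q₁ := ZMod.castHom (dvd_mul_right q₁ q₂) (ZMod q₁) with hf₁
  set f₂ : ZMod (q₁ * q₂) →+* ZMod q₂ := ZMod.castHom (dvd_mul_left q₂ q₁) (ZMod q₂) with hf₂
  have hf₁val : ∀ x : ZMod (q₁ * q₂), f₁ x = ((x.val : ℕ) : ZMod q₁) := fun x => by
    rw [hf₁, ZMod.castHom_apply, ZMod.natCast_val]
  have hf₂val : ∀ x : ZMod (q₁ * q₂), f₂ x = ((x.val : ℕ) : ZMod q₂) := fun x => by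
    rw [hf₂, ZMod.castHom_apply, ZMod.natCast_val]
  -- the combined map is bijective
  set F : ZMod (q₁ * q₂) →+* ZMod q₁ × ZMod q₂ := f₁.prod f₂ with hF
  have hFinj : Function.Injective F := by
    rw [injective_iff_map_eq_zero]
    intro z hz
    have h1 : f₁ z = 0 := congrArg Prod.fst hz
    have h2 : f₂ z = 0 := congrArg Prod.snd hz
    rw [hf₁val, ZMod.natCast_eq_zero_iff] at h1
    rw [hf₂val, ZMod.natCast_eq_zero_iff] at h2
    have : q₁ * q₂ ∣ z.val := hco.mul_dvd_of_dvd_of_dvd h1 h2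
    rw [← ZMod.natCast_zmod_val z, ZMod.natCast_eq_zero_iff]
    exact this
  have hFbij : Function.Bijective F := by
    rw [Fintype.bijective_iff_injective_and_card]
    refine ⟨hFinj, ?_⟩
    simp [ZMod.card]
  set E := Equiv.ofBijective F hFbij with hE
  have hEF : ∀ x, E x = F x := fun x => rfl
  have hFE : ∀ y, F (E.symm y) = y := fun y => E.apply_symm_apply y
  set d₁ := f₁ d with hd₁
  set d₂ := f₂ d with hd₂
  set t₁ := f₁ t with ht₁
  set t₂ := f₂ t with ht₂
  set a : ℤ := (t.val : ℤ) ^ 2 - 4 * (d.val : ℤ) with haa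
  have ha₁ : (a : ZMod q₁) = t₁ ^ 2 - 4 * d₁ := by
    rw [haa, ht₁, hd₁, hf₁val, hf₁val]
    push_cast
    ring
  have ha₂ : (a : ZMod q₂) = t₂ ^ 2 - 4 * d₂ := by
    rw [haa, ht₂, hd₂, hf₂val, hf₂val]
    push_cast
    ring
  -- filter simplification
  have hfilter : (Finset.univ.filter fun g : Matrix (Fin 2) (Fin 2) (ZMod (q₁ * q₂)) =>
        IsUnit g.det ∧ g.det = d ∧ g.trace = t)
      = (Finset.univ.filter fun g : Matrix (Fin 2) (Fin 2) (ZMod (q₁ * q₂)) =>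
        g.det = d ∧ g.trace = t) := by
    refine Finset.filter_congr fun g _ => ?_
    constructor
    · exact fun h => h.2
    · exact fun h => ⟨h.1 ▸ hd, h⟩
  rw [hfilter]
  -- CRT bijection on matrices
  set S₁ := (Finset.univ.filter fun g : Matrix (Fin 2) (Fin 2) (ZMod q₁) =>
      g.det = d₁ ∧ g.trace = t₁) with hS₁
  set S₂ := (Finset.univ.filter fun g : Matrix (Fin 2) (Fin 2) (ZMod q₂) =>
      g.det = d₂ ∧ g.trace = t₂) with hS₂
  have hsplit : (Finset.univ.filter fun g : Matrix (Fin 2) (Fin 2) (ZMod (q₁ * q₂)) =>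
        g.det = d ∧ g.trace = t).card = (S₁ ×ˢ S₂).card := by
    refine Finset.card_bij' (fun g _ => (g.map f₁, g.map f₂))
      (fun M _ => Matrix.of fun i j => E.symm (M.1 i j, M.2 i j)) ?_ ?_ ?_ ?_
    · intro g hg
      simp only [mem_filter, mem_univ, true_and] at hg
      simp only [hS₁, hS₂, Finset.mem_product, mem_filter, mem_univ, true_and]
      refine ⟨⟨?_, ?_⟩, ?_, ?_⟩
      · rw [← RingHom.mapMatrix_apply, ← RingHom.map_det, hg.1]
      · rw [trace_map_two, hg.2]
      · rw [← RingHom.mapMatrix_apply, ← RingHom.map_det, hg.1]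
      · rw [trace_map_two, hg.2]
    · intro M hM
      simp only [hS₁, hS₂, Finset.mem_product, mem_filter, mem_univ, true_and] at hM
      simp only [mem_filter, mem_univ, true_and]
      set g : Matrix (Fin 2) (Fin 2) (ZMod (q₁ * q₂)) :=
        Matrix.of fun i j => E.symm (M.1 i j, M.2 i j) with hg
      have hmap1 : g.map f₁ = M.1 := by
        ext i j
        have := hFE (M.1 i j, M.2 i j)
        exact congrArg Prod.fst this
      have hmap2 : g.map f₂ = M.2 := by
        ext i j
        have := hFE (M.1 i j, M.2 i j)
        exact congrArg Prod.snd this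
      constructor
      · apply hFinj
        have e1 : f₁ g.det = f₁ d := by
          rw [RingHom.map_det, RingHom.mapMatrix_apply, hmap1, hM.1.1]
        have e2 : f₂ g.det = f₂ d := by
          rw [RingHom.map_det, RingHom.mapMatrix_apply, hmap2, hM.2.1]
        exact Prod.ext e1 e2
      · apply hFinj
        have e1 : f₁ g.trace = f₁ t := by rw [← trace_map_two, hmap1, hM.1.2]
        have e2 : f₂ g.trace = f₂ t := by rw [← trace_map_two, hmap2, hM.2.2]
        exact Prod.ext e1 e2
    · intro g hg
      ext i j
      have : F (g i j) = (f₁ (g i j), f₂ (g i j)) := rfl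
      show E.symm ((g.map f₁) i j, (g.map f₂) i j) = g i j
      simp only [Matrix.map_apply]
      rw [← this, ← hEF, Equiv.symm_apply_apply]
    · intro M hM
      have hmap1 : (Matrix.of fun i j => E.symm (M.1 i j, M.2 i j)).map f₁ = M.1 := by
        ext i j
        exact congrArg Prod.fst (hFE (M.1 i j, M.2 i j))
      have hmap2 : (Matrix.of fun i j => E.symm (M.1 i j, M.2 i j)).map f₂ = M.2 := by
        ext i j
        exact congrArg Prod.snd (hFE (M.1 i j, M.2 i j))
      exact Prod.ext hmap1 hmap2
  rw [hsplit, Finset.card_product]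
  have hd₁ne : d₁ ≠ 0 := (hd.map f₁).ne_zero
  have hd₂ne : d₂ ≠ 0 := (hd.map f₂).ne_zero
  have hc₁ := card_det_tr_prime q₁ hq₁2 d₁ t₁ a ha₁
  have hc₂ := card_det_tr_prime q₂ hq₂2 d₂ t₂ a ha₂
  push_cast
  rw [← hS₁] at hc₁
  rw [← hS₂] at hc₂
  rw [hc₁, hc₂]
  ring
end

section
/- For an odd prime q and residues d, t mod q with d ≠ 0, the number of matrices g ∈ GL₂(ℤ/qℤ) with det(g) = d and tr(g) = t equals q·(q + ((t²-4d)/q)), where (·/q) is the Legendre symbol. -/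
/-!
Writing `g = !![a, b; c, t - a]`, the condition `det g = d` becomes `b * c = a * (t - a) - d`.
Over a field with `q` elements, `b * c = m` has `q - 1` solutions if `m ≠ 0` and `2q - 1` if
`m = 0`, so the count is `q (q - 1) + q N` with `N` the number of roots of `a * (t - a) = d`.
Completing the square, `N` is the number of square roots of `t² - 4d`, i.e. `1 + χ(t² - 4d)`.
-/

open Finset

theorem card_filter_prod_eq_sum {α β : Type*} [Fintype α] [Fintype β] (P : α × β → Prop)
    [DecidablePred P] : #{p | P p} = ∑ a, #{b | P (a, b)} := by
  simp only [card_filter]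
  exact Fintype.sum_prod_type _

theorem card_det_trace_eq_card_triples {R : Type*} [CommRing R] [Fintype R] [DecidableEq R]
    (d t : R) :
    #{g : Matrix (Fin 2) (Fin 2) R | g.det = d ∧ g.trace = t} =
      #{p : R × R × R | p.2.1 * p.2.2 = p.1 * (t - p.1) - d} := by
  refine card_nbij' (fun g => (g 0 0, g 0 1, g 1 0)) (fun p => !![p.1, p.2.1; p.2.2, t - p.1])
    ?_ ?_ ?_ ?_
  · intro g hg
    simp only [coe_filter, mem_univ, true_and, Set.mem_ofPred_eq, Matrix.det_fin_two,
      Matrix.trace_fin_two] at hg ⊢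
    obtain ⟨hdet, htr⟩ := hg
    rw [← htr]
    linear_combination -hdet
  · intro p hp
    simp only [coe_filter, mem_univ, true_and, Set.mem_ofPred_eq, Matrix.det_fin_two,
      Matrix.trace_fin_two, Matrix.of_apply, Matrix.cons_val', Matrix.cons_val_zero,
      Matrix.cons_val_one, Matrix.empty_val', Matrix.cons_val_fin_one] at hp ⊢
    exact ⟨by linear_combination -hp, add_sub_cancel p.1 t⟩
  · intro g hg
    simp only [coe_filter, mem_univ, true_and, Set.mem_ofPred_eq, Matrix.trace_fin_two] at hg
    change !![g 0 0, g 0 1; g 1 0, t - g 0 0] = g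
    rw [← hg.2, add_sub_cancel_left]
    exact (Matrix.eta_fin_two g).symm
  · intro p _
    simp

section Field

variable {F : Type*} [Field F] [Fintype F] [DecidableEq F]

theorem card_filter_mul_left_eq_of_ne_zero {x : F} (hx : x ≠ 0) (m : F) :
    #{y | x * y = m} = 1 :=
  card_eq_one.mpr ⟨x⁻¹ * m, by ext y; simp [eq_inv_mul_iff_mul_eq₀ hx]⟩

theorem card_filter_mul_eq (m : F) :
    (#{p : F × F | p.1 * p.2 = m} : ℤ) =
      Fintype.card F - 1 + if m = 0 then (Fintype.card F : ℤ) else 0 := by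
  rw [card_filter_prod_eq_sum, Nat.cast_sum, Fintype.sum_eq_add_sum_compl 0,
    sum_congr rfl fun x hx =>
      congrArg _ (card_filter_mul_left_eq_of_ne_zero (by simpa using hx) m)]
  have hzero : #{y : F | 0 * y = m} = if m = 0 then Fintype.card F else 0 := by
    split_ifs with hm <;> simp [hm, eq_comm]
  rw [hzero, sum_const, card_compl, card_singleton, Nat.cast_ite, Nat.cast_zero, nsmul_eq_mul,
    Nat.cast_sub Fintype.card_pos]
  push_cast
  ring

theorem card_filter_mul_sub_eq_card_sqrts (hF : ringChar F ≠ 2) (t d : F) :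
    #{a | a * (t - a) = d} = #{x | x ^ 2 = t ^ 2 - 4 * d} := by
  have h2 : (2 : F) ≠ 0 := Ring.two_ne_zero hF
  refine card_nbij' (fun a => 2 * a - t) (fun x => (x + t) / 2) ?_ ?_ ?_ ?_
  · intro a ha
    simp only [coe_filter, mem_univ, true_and, Set.mem_ofPred_eq] at ha ⊢
    linear_combination (-4 : F) * ha
  · intro x hx
    simp only [coe_filter, mem_univ, true_and, Set.mem_ofPred_eq] at hx ⊢
    field_simp
    linear_combination -hx
  · intro a _
    field_simp
    ring
  · intro x _
    field_simp
    ring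

theorem card_det_trace_eq_quadraticChar (hF : ringChar F ≠ 2) (d t : F) :
    (#{g : Matrix (Fin 2) (Fin 2) F | g.det = d ∧ g.trace = t} : ℤ) =
      Fintype.card F * (Fintype.card F + quadraticChar F (t ^ 2 - 4 * d)) := by
  have hroots : (#{a : F | a * (t - a) = d} : ℤ) = quadraticChar F (t ^ 2 - 4 * d) + 1 := by
    rw [card_filter_mul_sub_eq_card_sqrts hF, ← quadraticChar_card_sqrts hF,
      Set.toFinset_ofPred]
  rw [card_det_trace_eq_card_triples, card_filter_prod_eq_sum, Nat.cast_sum]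
  simp only [card_filter_mul_eq, sub_eq_zero, sum_add_distrib, ← sum_filter, sum_const,
    card_univ, nsmul_eq_mul, hroots]
  ring

end Field

/-- For an odd prime `q`, a nonzero residue `d` and any residue `t` mod `q`,
the number of `g ∈ GL₂(ℤ/qℤ)` with `det g = d` and `tr g = t` equals
`q (q + ((t²-4d)/q))`. -/
theorem card_GL2_det_tr_prime (q : ℕ) [Fact q.Prime] (hodd : Odd q)
    (d t : ZMod q) (hd : d ≠ 0) :
    ((Finset.univ.filter fun g : Matrix (Fin 2) (Fin 2) (ZMod q) =>
        IsUnit g.det ∧ g.det = d ∧ g.trace = t).card : ℤ) =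
      (q : ℤ) * ((q : ℤ) + legendreSym q ((t.val : ℤ) ^ 2 - 4 * (d.val : ℤ))) := by
  have hchar : ringChar (ZMod q) ≠ 2 := by
    rw [ZMod.ringChar_zmod_n]
    rintro rfl
    exact Nat.not_odd_iff_even.mpr even_two hodd
  have hunit : ∀ g : Matrix (Fin 2) (Fin 2) (ZMod q), g.det = d → IsUnit g.det :=
    fun g h => h ▸ hd.isUnit
  have hdisc : (((t.val : ℤ) ^ 2 - 4 * (d.val : ℤ) : ℤ) : ZMod q) = t ^ 2 - 4 * d := by
    push_cast [ZMod.natCast_zmod_val]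
    rfl
  rw [filter_congr fun g _ => and_iff_right_of_imp fun h => hunit g h.1,
    card_det_trace_eq_quadraticChar hchar, ZMod.card, legendreSym, hdisc]
end
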